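/- Let q₀ : ℝ → ℂ be continuous and let z₁,…,z_n ∈ ℂ be distinct with Im z_k > 0. Suppose s₁,…,s_n : ℝ → ℂ² are differentiable solutions of s_k′(x) = −i conj(z_k) σ₃ s_k(x) + Q(q₀(x)) s_k(x), the Gramian matrix M(x) is invertible for every x, r_k(x) is the unique solution of the linear system (L1), and q(x) := q₀(x) − (2/D(x)) Σ_{k,j=1}^n D_{j,k}(x) s_{j,1}(x) conj(s_{k,2}(x)). Let z ∈ ℂ with z ∉ {z₁,…,z_n, conj(z₁),…,conj(z_n)}, and let φ₀ : ℝ → M₂(ℂ) be differentiable with φ₀′(x) = (−i z σ₃ + Q(q₀(x))) φ₀(x). Define χ(x) := I + Σ_{k=1}^n i (r_k(x) ⊗ conj(s_k(x)))/(z − z_k) and φ(x) := χ(x) φ₀(x). Then φ is differentiable and φ′(x) = (−i z σ₃ + Q(q(x))) φ(x) for all x ∈ ℝ. -/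

import Mathlib

open MeasureTheory Matrix ENNReal Filter

noncomputable section

/-- The Pauli matrix `σ₃ = diag(1, -1)`. -/
def sigma3 : Matrix (Fin 2) (Fin 2) ℂ := !![1, 0; 0, -1]

/-- `Q(w)` : the off-diagonal matrix with `(1,2)`-entry `w` and `(2,1)`-entry `-conj w`. -/
def Qm (w : ℂ) : Matrix (Fin 2) (Fin 2) ℂ := !![0, w; -(starRingEnd ℂ w), 0]

/-- The Hermitian inner product `⟨u,v⟩ = conj u₁ * v₁ + conj u₂ * v₂` on `ℂ²`. -/
def inn (u v : Fin 2 → ℂ) : ℂ := starRingEnd ℂ (u 0) * v 0 + starRingEnd ℂ (u 1) * v 1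

/-- The outer product `u ⊗ conj v`. -/
def outer (u v : Fin 2 → ℂ) : Matrix (Fin 2) (Fin 2) ℂ :=
  Matrix.of fun a b => u a * starRingEnd ℂ (v b)

/-- The Gramian matrix `M_{k,j} = -i ⟨s_j, s_k⟩ / (conj z_k - z_j)`. -/
def gram {n : ℕ} (z : Fin n → ℂ) (s : Fin n → Fin 2 → ℂ) : Matrix (Fin n) (Fin n) ℂ :=
  Matrix.of fun k j => -Complex.I * inn (s j) (s k) / (starRingEnd ℂ (z k) - z j)

/-- The `(j,k)`-cofactor `D_{j,k}` of a square matrix. -/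
def cof {n : ℕ} (A : Matrix (Fin n) (Fin n) ℂ) (j k : Fin n) : ℂ := A.adjugate k j

/-- The linear system (L1): `i s_k = ∑_j (⟨s_j,s_k⟩/(conj z_k - z_j)) r_j`. -/
def L1sys {n : ℕ} (z : Fin n → ℂ) (s r : Fin n → Fin 2 → ℂ) : Prop :=
  ∀ k, Complex.I • s k = ∑ j, (inn (s j) (s k) / (starRingEnd ℂ (z k) - z j)) • r j

/-- The linear system (L2): `i r_k = ∑_j (⟨r_j,r_k⟩/(conj z_j - z_k)) s_j`. -/
def L2sys {n : ℕ} (z : Fin n → ℂ) (s r : Fin n → Fin 2 → ℂ) : Prop :=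
  ∀ k, Complex.I • r k = ∑ j, (inn (r j) (r k) / (starRingEnd ℂ (z j) - z k)) • s j

/-- A classical solution of the cubic NLS equation `i q_t + q_xx + 2 |q|² q = 0`;
functions of `(x, t)` are encoded as `q : ℝ → ℝ → ℂ`, `x` first. -/
def IsClassicalNLS (q : ℝ → ℝ → ℂ) : Prop :=
  (∀ t, ContDiff ℝ 2 fun x => q x t) ∧ (∀ x, ContDiff ℝ 1 fun t => q x t) ∧
    ∀ x t, Complex.I * deriv (fun τ => q x τ) t + deriv (deriv fun y => q y t) x
      + 2 * (‖q x t‖ : ℂ) ^ 2 * q x t = 0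

/-- The `x`-part Lax matrix `U = -i z σ₃ + Q(w)`. -/
def Ux (z w : ℂ) : Matrix (Fin 2) (Fin 2) ℂ := (-(Complex.I * z)) • sigma3 + Qm w

/-- The `t`-part Lax matrix `V = i(|w|² - 2z²) σ₃ + 2 z Q(w) - i Q(w_x) σ₃`. -/
def Vt (z w wx : ℂ) : Matrix (Fin 2) (Fin 2) ℂ :=
  (Complex.I * ((‖w‖ : ℂ) ^ 2 - 2 * z ^ 2)) • sigma3 + (2 * z) • Qm w
    - Complex.I • (Qm wx * sigma3)

/-- The dressed potential `q = q₀ - (2/D) ∑_{k,j} D_{j,k} s_{j,1} conj (s_{k,2})` (pointwise). -/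
def dressQ {n : ℕ} (z : Fin n → ℂ) (q0 : ℂ) (s : Fin n → Fin 2 → ℂ) : ℂ :=
  q0 - 2 / (gram z s).det *
    ∑ k, ∑ j, cof (gram z s) j k * s j 0 * starRingEnd ℂ (s k 1)

/-- `Σ^S` of the 2-soliton, as a function of the phases `φ₁, φ₂, ψ₁, ψ₂`. -/
def SigmaSof (η₁ η₂ ξ₁ ξ₂ φ₁ φ₂ ψ₁ ψ₂ : ℝ) : ℂ :=
  (Complex.exp (-2*(η₂:ℂ)*(φ₂:ℂ) + 2*Complex.I*(ψ₁:ℂ)) +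
      Complex.exp (2*(η₂:ℂ)*(φ₂:ℂ) + 2*Complex.I*(ψ₁:ℂ))) / (2*(η₂:ℂ))
  + (Complex.exp (-2*(η₁:ℂ)*(φ₁:ℂ) + 2*Complex.I*(ψ₂:ℂ)) +
      Complex.exp (2*(η₁:ℂ)*(φ₁:ℂ) + 2*Complex.I*(ψ₂:ℂ))) / (2*(η₁:ℂ))
  - (Complex.exp (-2*(η₂:ℂ)*(φ₂:ℂ) + 2*Complex.I*(ψ₁:ℂ)) +
      Complex.exp (2*(η₁:ℂ)*(φ₁:ℂ) + 2*Complex.I*(ψ₂:ℂ))) /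
        ((η₁:ℂ) + (η₂:ℂ) + Complex.I*((ξ₁:ℂ) - (ξ₂:ℂ)))
  - (Complex.exp (-2*(η₁:ℂ)*(φ₁:ℂ) + 2*Complex.I*(ψ₂:ℂ)) +
      Complex.exp (2*(η₂:ℂ)*(φ₂:ℂ) + 2*Complex.I*(ψ₁:ℂ))) /
        ((η₁:ℂ) + (η₂:ℂ) - Complex.I*((ξ₁:ℂ) - (ξ₂:ℂ)))

/-- `D^S` of the 2-soliton, as a function of the phases `φ₁, φ₂, ψ₁, ψ₂`. -/
def DSof (η₁ η₂ ξ₁ ξ₂ φ₁ φ₂ ψ₁ ψ₂ : ℝ) : ℂ :=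
  (Complex.exp (-2*(η₁:ℂ)*(φ₁:ℂ)) + Complex.exp (2*(η₁:ℂ)*(φ₁:ℂ))) *
      (Complex.exp (-2*(η₂:ℂ)*(φ₂:ℂ)) + Complex.exp (2*(η₂:ℂ)*(φ₂:ℂ))) / (4*(η₁:ℂ)*(η₂:ℂ))
  - (Complex.exp (-(η₁:ℂ)*(φ₁:ℂ) - (η₂:ℂ)*(φ₂:ℂ) + Complex.I*((ψ₁:ℂ) - (ψ₂:ℂ))) +
      Complex.exp ((η₁:ℂ)*(φ₁:ℂ) + (η₂:ℂ)*(φ₂:ℂ) - Complex.I*((ψ₁:ℂ) - (ψ₂:ℂ)))) *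
    (Complex.exp (-(η₁:ℂ)*(φ₁:ℂ) - (η₂:ℂ)*(φ₂:ℂ) - Complex.I*((ψ₁:ℂ) - (ψ₂:ℂ))) +
      Complex.exp ((η₁:ℂ)*(φ₁:ℂ) + (η₂:ℂ)*(φ₂:ℂ) + Complex.I*((ψ₁:ℂ) - (ψ₂:ℂ)))) /
    (((η₁:ℂ) + (η₂:ℂ))^2 + ((ξ₁:ℂ) - (ξ₂:ℂ))^2)

/-- The phase `φ = x + 4 ξ t - x_c`. -/
def phiSol (ξ xc x t : ℝ) : ℝ := x + 4*ξ*t - xc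

/-- The phase `ψ = θ - ξ (x + 2 ξ t - x_c) + 2 η² t`. -/
def psiSol (θ ξ xc η x t : ℝ) : ℝ := θ - ξ*(x + 2*ξ*t - xc) + 2*η^2*t

/-- `D^S(x,t)` for the 2-soliton with parameters `η₁, η₂, ξ₁, ξ₂, x₁, x₂, θ₁, θ₂`. -/
def twoSolitonD (η₁ η₂ ξ₁ ξ₂ x₁ x₂ θ₁ θ₂ x t : ℝ) : ℂ :=
  DSof η₁ η₂ ξ₁ ξ₂ (phiSol ξ₁ x₁ x t) (phiSol ξ₂ x₂ x t)
    (psiSol θ₁ ξ₁ x₁ η₁ x t) (psiSol θ₂ ξ₂ x₂ η₂ x t)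

/-- `Σ^S(x,t)` for the 2-soliton. -/
def twoSolitonSigma (η₁ η₂ ξ₁ ξ₂ x₁ x₂ θ₁ θ₂ x t : ℝ) : ℂ :=
  SigmaSof η₁ η₂ ξ₁ ξ₂ (phiSol ξ₁ x₁ x t) (phiSol ξ₂ x₂ x t)
    (psiSol θ₁ ξ₁ x₁ η₁ x t) (psiSol θ₂ ξ₂ x₂ η₂ x t)

/-- The 2-soliton `q^S = 2 Σ^S / D^S`. -/
def twoSoliton (η₁ η₂ ξ₁ ξ₂ x₁ x₂ θ₁ θ₂ x t : ℝ) : ℂ :=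
  2 * twoSolitonSigma η₁ η₂ ξ₁ ξ₂ x₁ x₂ θ₁ θ₂ x t / twoSolitonD η₁ η₂ ξ₁ ξ₂ x₁ x₂ θ₁ θ₂ x t

/-- The separable (Jost-type) form
`s = e^{-i conj z (x - x_j) - 2 i conj z² t + i θ_j} f - e^{i conj z (x - x_j) + 2 i conj z² t - i θ_j} g`. -/
def jost (zj : ℂ) (xj θj : ℝ) (f g : ℝ → ℝ → Fin 2 → ℂ) (x t : ℝ) : Fin 2 → ℂ :=
  Complex.exp (-(Complex.I) * starRingEnd ℂ zj * ((x:ℂ) - (xj:ℂ))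
      - 2*Complex.I*(starRingEnd ℂ zj)^2*(t:ℂ) + Complex.I*(θj:ℂ)) • f x t
  - Complex.exp (Complex.I * starRingEnd ℂ zj * ((x:ℂ) - (xj:ℂ))
      + 2*Complex.I*(starRingEnd ℂ zj)^2*(t:ℂ) - Complex.I*(θj:ℂ)) • g x t

/-- The pair of eigenvalues `z_j = ξ_j + i η_j`, `j = 1, 2`. -/
def zvec (ξ₁ η₁ ξ₂ η₂ : ℝ) : Fin 2 → ℂ :=
  ![(ξ₁:ℂ) + (η₁:ℂ)*Complex.I, (ξ₂:ℂ) + (η₂:ℂ)*Complex.I]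

/-- The two vector functions `s₁, s₂` in separable form. -/
def sJ (ξ₁ η₁ ξ₂ η₂ x₁ x₂ θ₁ θ₂ : ℝ) (f g : Fin 2 → ℝ → ℝ → Fin 2 → ℂ) (j : Fin 2)
    (x t : ℝ) : Fin 2 → ℂ :=
  jost (zvec ξ₁ η₁ ξ₂ η₂ j) (![x₁, x₂] j) (![θ₁, θ₂] j) (f j) (g j) x t

/-- The explicit vector solutions used to build the `n`-soliton from `q₀ = 0`. -/
def solS {n : ℕ} (z : Fin n → ℂ) (xs θ : Fin n → ℝ) (j : Fin n) (x t : ℝ) : Fin 2 → ℂ :=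
  ![Complex.exp (-(Complex.I) * starRingEnd ℂ (z j) * ((x:ℂ) - ((xs j : ℝ):ℂ))
      - 2*Complex.I*(starRingEnd ℂ (z j))^2*(t:ℂ) + Complex.I*((θ j : ℝ):ℂ)),
    -Complex.exp (Complex.I * starRingEnd ℂ (z j) * ((x:ℂ) - ((xs j : ℝ):ℂ))
      + 2*Complex.I*(starRingEnd ℂ (z j))^2*(t:ℂ) - Complex.I*((θ j : ℝ):ℂ))]

/-- The `n`-soliton with parameters `{ξ_j, η_j, x_j, θ_j}`. -/
def nSoliton {n : ℕ} (ξ η xs θ : Fin n → ℝ) (x t : ℝ) : ℂ :=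
  dressQ (fun j => (ξ j : ℂ) + (η j : ℂ)*Complex.I) 0
    (fun j => solS (fun j => (ξ j : ℂ) + (η j : ℂ)*Complex.I) xs θ j x t)


/-!
Put `R = ∑ₖ rₖ ⊗ conj sₖ`. Since `s = M r` with `M` the (Hermitian) Gramian, `R` is Hermitian and
the dressed potential is `q = q₀ - 2 R₀₁`, which says exactly `Q(q) - Q(q₀) = R σ₃ - σ₃ R`.
The Gramian satisfies `M'ₖⱼ = -⟨sⱼ, σ₃ sₖ⟩`; differentiating `s = M r` and using this commutator
identity gives `M (r' - U(zⱼ, q) r) = 0`, so each `rⱼ` solves the Lax equation at `zⱼ` for the new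
potential `q`. Finally `χ' = U(w, q) χ - χ U(w, q₀)`: in the `k`-th term of `χ` the pole at `w = zₖ`
cancels because `U(zₖ, ·) - U(w, ·) = i (w - zₖ) σ₃`, and what is left is again `R σ₃ - σ₃ R`.
-/

open Complex ComplexConjugate

section LaxAlgebra

lemma Ux_eq_Ux_add (ζ ζ' p : ℂ) : Ux ζ p = Ux ζ' p + (I * (ζ' - ζ)) • sigma3 := by
  unfold Ux; module

lemma Ux_sub_Ux (ζ p p₀ : ℂ) : Ux ζ p - Ux ζ p₀ = Qm p - Qm p₀ := by
  simp only [Ux]; abel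

lemma Ux_eq_of (ζ p : ℂ) : Ux ζ p = !![-(I * ζ), p; -conj p, I * ζ] := by
  ext a b; fin_cases a <;> fin_cases b <;> simp [Ux, sigma3, Qm]

lemma Ux_conjTranspose (ζ p : ℂ) : (Ux ζ p)ᴴ = -Ux (conj ζ) p := by
  ext a b; fin_cases a <;> fin_cases b <;> simp [Ux, sigma3, Qm]

lemma inn_Ux_mulVec_add (α β p : ℂ) (u v : Fin 2 → ℂ) :
    inn (Ux α p *ᵥ u) v + inn u (Ux β p *ᵥ v) = I * (conj α - β) * inn u (sigma3 *ᵥ v) := by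
  simp only [Ux_eq_of, sigma3, inn, mulVec, dotProduct, Fin.sum_univ_two, of_apply, cons_val',
    cons_val_zero, cons_val_one, cons_val_fin_one, map_add, map_mul, map_neg, conj_I, conj_conj]
  ring

lemma outer_mulVec (u v w : Fin 2 → ℂ) : outer u v *ᵥ w = inn v w • u := by
  ext a
  simp only [outer, inn, mulVec, dotProduct, Fin.sum_univ_two, of_apply, Pi.smul_apply, smul_eq_mul]
  ring

lemma outer_mulVec_left (A : Matrix (Fin 2) (Fin 2) ℂ) (u v : Fin 2 → ℂ) :
    outer (A *ᵥ u) v = A * outer u v := by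
  ext a b
  simp only [outer, mulVec, dotProduct, Fin.sum_univ_two, of_apply, Matrix.mul_apply]
  ring

lemma outer_mulVec_right (B : Matrix (Fin 2) (Fin 2) ℂ) (u v : Fin 2 → ℂ) :
    outer u (B *ᵥ v) = outer u v * Bᴴ := by
  ext a b
  simp only [outer, mulVec, dotProduct, Fin.sum_univ_two, of_apply, Matrix.mul_apply,
    conjTranspose_apply, map_add, map_mul, RCLike.star_def]
  ring

lemma Qm_sub (p p₀ : ℂ) : Qm p - Qm p₀ = Qm (p - p₀) := by
  unfold Qm
  ext a b; fin_cases a <;> fin_cases b <;> simp [sub_eq_add_neg, add_comm]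

lemma mul_sigma3_sub_sigma3_mul {R : Matrix (Fin 2) (Fin 2) ℂ} (hR : R.IsHermitian) :
    R * sigma3 - sigma3 * R = Qm (-2 * R 0 1) := by
  have h10 : R 1 0 = conj (R 0 1) := (hR.apply 1 0).symm
  ext a b
  simp only [Matrix.sub_apply, Matrix.mul_apply, Fin.sum_univ_two]
  fin_cases a <;> fin_cases b <;> simp [sigma3, Qm, h10, map_ofNat] <;> ring

end LaxAlgebra

section Cramer

variable {ι R V : Type*} [Fintype ι] [DecidableEq ι] [CommRing R] [AddCommGroup V] [Module R V]

theorem Matrix.det_smul_eq_sum_adjugate_smul (M : Matrix ι ι R) {r s : ι → V}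
    (h : ∀ k, s k = ∑ j, M k j • r j) (j : ι) :
    M.det • r j = ∑ k, M.adjugate j k • s k := by
  simp_rw [h, Finset.smul_sum, smul_smul]
  rw [Finset.sum_comm]
  simp_rw [← Finset.sum_smul, ← Matrix.mul_apply, adjugate_mul, Matrix.smul_apply, one_apply,
    smul_eq_mul, mul_ite, mul_one, mul_zero, ite_smul, zero_smul, Finset.sum_ite_eq,
    Finset.mem_univ, if_true]

theorem Matrix.eq_zero_of_sum_smul_eq_zero {M : Matrix ι ι R} (hM : IsUnit M) {r : ι → V}
    (h : ∀ k, ∑ j, M k j • r j = 0) : r = 0 := by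
  funext j
  have hdet := (M.isUnit_iff_isUnit_det.1 hM)
  rw [Pi.zero_apply, ← hdet.smul_left_cancel, smul_zero,
    M.det_smul_eq_sum_adjugate_smul (s := 0) (fun k => (h k).symm) j]
  simp

end Cramer

section Gram

variable {n : ℕ} (z : Fin n → ℂ) {s r : Fin n → Fin 2 → ℂ}

lemma conj_sub_ne_zero_of_im_pos {a b : ℂ} (ha : 0 < a.im) (hb : 0 < b.im) : conj a - b ≠ 0 := by
  intro h
  have him := congrArg Complex.im h
  simp only [sub_im, conj_im, zero_im] at him
  linarith

lemma gram_isHermitian (s : Fin n → Fin 2 → ℂ) : (gram z s).IsHermitian := by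
  ext k j
  simp only [conjTranspose_apply, _root_.gram, of_apply, inn, ← starRingEnd_apply, map_div₀,
    map_mul, map_neg, map_add, map_sub, conj_I, conj_conj]
  rw [← neg_sub, div_neg, ← neg_div]
  ring

lemma L1sys.eq_sum_gram_smul (h : L1sys z s r) (k : Fin n) : s k = ∑ j, gram z s k j • r j := by
  have hk := congrArg (fun v => (-I) • v) (h k)
  simp only [smul_smul, neg_mul, I_mul_I, neg_neg, one_smul, Finset.smul_sum] at hk
  rw [hk]
  simp only [_root_.gram, of_apply, neg_mul, neg_div, mul_div_assoc]

lemma L1sys.dressQ_eq (h : L1sys z s r) (hM : IsUnit (gram z s)) (p₀ : ℂ) :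
    dressQ z p₀ s = p₀ - 2 * (∑ k, outer (r k) (s k)) 0 1 := by
  have hdet : (gram z s).det ≠ 0 := ((gram z s).isUnit_iff_isUnit_det.1 hM).ne_zero
  have hcramer (k : Fin n) : ∑ j, (gram z s).adjugate k j * s j 0 = (gram z s).det * r k 0 := by
    have := congrFun ((gram z s).det_smul_eq_sum_adjugate_smul (h.eq_sum_gram_smul z) k) 0
    simpa [Finset.sum_apply] using this.symm
  have hsum : ∑ k, ∑ j, cof (gram z s) j k * s j 0 * conj (s k 1)
      = (gram z s).det * (∑ k, outer (r k) (s k)) 0 1 := by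
    simp only [cof, ← Finset.sum_mul, hcramer]
    simp only [Matrix.sum_apply, outer, of_apply, Finset.mul_sum, mul_assoc]
  rw [dressQ, hsum]
  field_simp

lemma isHermitian_sum_outer {M : Matrix (Fin n) (Fin n) ℂ} (hM : M.IsHermitian)
    (h : ∀ k, s k = ∑ j, M k j • r j) : (∑ k, outer (r k) (s k)).IsHermitian := by
  ext a b
  simp only [conjTranspose_apply, Matrix.sum_apply, outer, of_apply, h, Finset.sum_apply,
    Pi.smul_apply, smul_eq_mul, ← starRingEnd_apply, map_sum, Finset.mul_sum]
  rw [Finset.sum_comm]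
  refine Finset.sum_congr rfl fun k _ => Finset.sum_congr rfl fun j _ => ?_
  rw [← hM.apply k j]
  simp only [← starRingEnd_apply, map_mul, conj_conj]
  ring

lemma L1sys.Qm_dressQ_sub (h : L1sys z s r) (hM : IsUnit (gram z s)) (p₀ : ℂ) :
    Qm (dressQ z p₀ s) - Qm p₀
      = (∑ k, outer (r k) (s k)) * sigma3 - sigma3 * ∑ k, outer (r k) (s k) := by
  have hR := isHermitian_sum_outer (gram_isHermitian z s) (h.eq_sum_gram_smul z)
  rw [mul_sigma3_sub_sigma3_mul hR, Qm_sub, h.dressQ_eq z hM]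
  ring_nf

end Gram

section LaxCompatibility

variable {n : ℕ} {z : Fin n → ℂ} {s r : Fin n → Fin 2 → ℂ}

lemma sum_outer_mulVec (v : Fin 2 → ℂ) :
    (∑ j, outer (r j) (s j)) *ᵥ v = ∑ j, inn (s j) v • r j := by
  simp only [sum_mulVec, outer_mulVec]

lemma gram_smul_Ux_mulVec {k j : Fin n} (hden : conj (z k) - z j ≠ 0) (p : ℂ) (v : Fin 2 → ℂ) :
    gram z s k j • (Ux (z j) p *ᵥ v)
      = Ux (conj (z k)) p *ᵥ (gram z s k j • v) + inn (s j) (s k) • (sigma3 *ᵥ v) := by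
  have hcoef : gram z s k j * (I * (conj (z k) - z j)) = inn (s j) (s k) := by
    simp only [_root_.gram, of_apply]
    field_simp
    ring_nf
    rw [I_sq]
    ring
  rw [Ux_eq_Ux_add (z j) (conj (z k)), add_mulVec, smul_mulVec, smul_add, mulVec_smul, smul_smul,
    hcoef]

lemma L1sys.Ux_mulVec_eq (h : L1sys z s r) {k : Fin n} (hden : ∀ j, conj (z k) - z j ≠ 0)
    {p p₀ : ℂ} (hp : Qm p - Qm p₀
      = (∑ j, outer (r j) (s j)) * sigma3 - sigma3 * ∑ j, outer (r j) (s j)) :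
    Ux (conj (z k)) p₀ *ᵥ s k
      = ∑ j, (-inn (s j) (sigma3 *ᵥ s k)) • r j + ∑ j, gram z s k j • (Ux (z j) p *ᵥ r j) := by
  have hU : Ux (conj (z k)) p₀ = Ux (conj (z k)) p - (Qm p - Qm p₀) := by
    rw [← Ux_sub_Ux (conj (z k))]; abel
  simp_rw [gram_smul_Ux_mulVec (hden _), Finset.sum_add_distrib, ← mulVec_sum, ← h.eq_sum_gram_smul,
    ← mulVec_smul, ← mulVec_sum, neg_smul, Finset.sum_neg_distrib, ← sum_outer_mulVec, hU, hp,
    sub_mulVec, ← mulVec_mulVec]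
  abel

end LaxCompatibility

section MatrixCalculus

variable {𝕜 𝔸 m : Type*} [NontriviallyNormedField 𝕜] [NormedCommRing 𝔸] [NormedAlgebra 𝕜 𝔸]
  [Fintype m] [DecidableEq m] {A : 𝕜 → Matrix m m 𝔸} {x : 𝕜}

theorem DifferentiableAt.matrix_det (h : ∀ i j, DifferentiableAt 𝕜 (fun y => A y i j) x) :
    DifferentiableAt 𝕜 (fun y => (A y).det) x := by
  simp only [det_apply']
  exact .fun_sum fun σ _ => (DifferentiableAt.fun_finsetProd fun i _ => h (σ i) i).const_mul _

theorem DifferentiableAt.matrix_adjugate_apply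
    (h : ∀ i j, DifferentiableAt 𝕜 (fun y => A y i j) x) (i j : m) :
    DifferentiableAt 𝕜 (fun y => (A y).adjugate i j) x := by
  simp only [adjugate_apply]
  refine DifferentiableAt.matrix_det fun a b => ?_
  rcases eq_or_ne a j with rfl | hab
  · simp only [updateRow_self]
    exact differentiableAt_const _
  · simpa only [updateRow_ne hab] using h a b

end MatrixCalculus

section GramCalculus

variable {n : ℕ} {z : Fin n → ℂ} {s r : Fin n → ℝ → Fin 2 → ℂ} {x : ℝ}

theorem HasDerivAt.inn {u v : ℝ → Fin 2 → ℂ} {u' v' : Fin 2 → ℂ} (hu : HasDerivAt u u' x)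
    (hv : HasDerivAt v v' x) :
    HasDerivAt (fun y => inn (u y) (v y)) (inn u' (v x) + inn (u x) v') x := by
  have hu' (a : Fin 2) : HasDerivAt (fun y => conj (u y a)) (conj (u' a)) x :=
    (hasDerivAt_pi.1 hu a).star
  have hv' (a : Fin 2) := hasDerivAt_pi.1 hv a
  refine (((hu' 0).mul (hv' 0)).add ((hu' 1).mul (hv' 1))).congr_deriv ?_
  simp only [_root_.inn]
  ring

theorem differentiableAt_gram_apply (hs : ∀ k, DifferentiableAt ℝ (s k) x) (k j : Fin n) :
    DifferentiableAt ℝ (fun y => gram z (fun k => s k y) k j) x :=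
  (((hs j).hasDerivAt.inn (hs k).hasDerivAt).differentiableAt.const_mul _).div_const _

theorem hasDerivAt_gram_apply {p : ℂ} (hs : ∀ k, HasDerivAt (s k) (Ux (conj (z k)) p *ᵥ s k x) x)
    {k j : Fin n} (hden : conj (z k) - z j ≠ 0) :
    HasDerivAt (fun y => gram z (fun k => s k y) k j) (-inn (s j x) (sigma3 *ᵥ s k x)) x := by
  refine ((((hs j).inn (hs k)).const_mul (-I)).div_const (conj (z k) - z j)).congr_deriv ?_
  rw [inn_Ux_mulVec_add, conj_conj]
  field_simp
  ring_nf
  rw [I_sq]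
  ring

theorem L1sys.differentiableAt (hr : ∀ y, L1sys z (fun k => s k y) fun k => r k y)
    (hM : ∀ y, IsUnit (gram z fun k => s k y)) (hs : ∀ k, DifferentiableAt ℝ (s k) x)
    (j : Fin n) : DifferentiableAt ℝ (r j) x := by
  have hdet (y : ℝ) : IsUnit (gram z fun k => s k y).det := (isUnit_iff_isUnit_det _).1 (hM y)
  have hcramer : r j = fun y => (gram z fun k => s k y).det⁻¹ •
      ∑ k, (gram z fun k => s k y).adjugate j k • s k y := by
    funext y
    rw [← det_smul_eq_sum_adjugate_smul _ ((hr y).eq_sum_gram_smul z),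
      inv_smul_smul₀ (hdet y).ne_zero]
  rw [hcramer]
  have hgram := differentiableAt_gram_apply (z := z) hs
  exact ((DifferentiableAt.matrix_det hgram).inv (hdet x).ne_zero).smul
    (.fun_sum fun k _ => (DifferentiableAt.matrix_adjugate_apply hgram j k).smul (hs k))


theorem L1sys.hasDerivAt (hr : ∀ y, L1sys z (fun k => s k y) fun k => r k y)
    (hM : ∀ y, IsUnit (gram z fun k => s k y)) (hden : ∀ k j, conj (z k) - z j ≠ 0) {p p₀ : ℂ}
    (hs : ∀ k, HasDerivAt (s k) (Ux (conj (z k)) p₀ *ᵥ s k x) x)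
    (hp : Qm p - Qm p₀
      = (∑ j, outer (r j x) (s j x)) * sigma3 - sigma3 * ∑ j, outer (r j x) (s j x))
    (j : Fin n) : HasDerivAt (r j) (Ux (z j) p *ᵥ r j x) x := by
  have hr' (j : Fin n) : HasDerivAt (r j) (deriv (r j) x) x :=
    (L1sys.differentiableAt hr hM (fun k => (hs k).differentiableAt) j).hasDerivAt
  have hsum (k : Fin n) :
      ∑ j, gram z (fun k => s k x) k j • (deriv (r j) x - Ux (z j) p *ᵥ r j x) = 0 := by
    have hsk : HasDerivAt (s k) (∑ j, (gram z (fun k => s k x) k j • deriv (r j) x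
        + (-inn (s j x) (sigma3 *ᵥ s k x)) • r j x)) x := by
      have hsum_eq : (fun y => ∑ j, gram z (fun k => s k y) k j • r j y) = s k :=
        funext fun y => ((hr y).eq_sum_gram_smul z k).symm
      have hderiv := HasDerivAt.fun_sum (u := Finset.univ) fun j _ =>
        (hasDerivAt_gram_apply hs (hden k j)).fun_smul (hr' j)
      rwa [hsum_eq] at hderiv
    have hderiv := (hs k).unique hsk
    rw [(hr x).Ux_mulVec_eq (hden k) hp, Finset.sum_add_distrib, add_comm] at hderiv
    simp only [smul_sub, Finset.sum_sub_distrib]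
    exact sub_eq_zero.2 (add_right_cancel hderiv).symm
  have hzero := eq_zero_of_sum_smul_eq_zero (hM x) hsum
  exact (hr' j).congr_deriv (sub_eq_zero.1 (congrFun hzero j))

end GramCalculus

section Dressing

variable {n : ℕ} (w : ℂ) (z : Fin n → ℂ)

def dressing (r s : Fin n → Fin 2 → ℂ) : Matrix (Fin 2) (Fin 2) ℂ :=
  1 + ∑ k, (I / (w - z k)) • outer (r k) (s k)

lemma Ux_mul_dressing_sub_dressing_mul_Ux {r s : Fin n → Fin 2 → ℂ} (hw : ∀ k, w ≠ z k)
    {p p₀ : ℂ} (hp : Qm p - Qm p₀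
      = (∑ k, outer (r k) (s k)) * sigma3 - sigma3 * ∑ k, outer (r k) (s k)) :
    Ux w p * dressing w z r s - dressing w z r s * Ux w p₀
      = ∑ k, (I / (w - z k)) •
          (outer (Ux (z k) p *ᵥ r k) (s k) + outer (r k) (Ux (conj (z k)) p₀ *ᵥ s k)) := by
  have hterm (k : Fin n) : (I / (w - z k)) •
      (outer (Ux (z k) p *ᵥ r k) (s k) + outer (r k) (Ux (conj (z k)) p₀ *ᵥ s k))
        = (I / (w - z k)) • (Ux w p * outer (r k) (s k) - outer (r k) (s k) * Ux w p₀)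
          + (outer (r k) (s k) * sigma3 - sigma3 * outer (r k) (s k)) := by
    have hc : I / (w - z k) * (I * (w - z k)) = -1 := by
      field_simp [sub_ne_zero.2 (hw k)]
      rw [I_sq]
    rw [outer_mulVec_left, outer_mulVec_right, Ux_conjTranspose, conj_conj, Ux_eq_Ux_add (z k) w p,
      Ux_eq_Ux_add (z k) w p₀]
    simp only [add_mul, mul_add, mul_neg, smul_mul_assoc, mul_smul_comm, smul_add, smul_neg,
      smul_sub, smul_smul, hc, neg_smul, one_smul]
    abel
  rw [Finset.sum_congr rfl fun k _ => hterm k, Finset.sum_add_distrib, Finset.sum_sub_distrib,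
    ← Finset.sum_mul, ← Finset.mul_sum, ← hp, ← Ux_sub_Ux w]
  simp only [dressing, mul_add, add_mul, mul_one, one_mul, Finset.mul_sum, Finset.sum_mul,
    mul_smul_comm, smul_mul_assoc, smul_sub, Finset.sum_sub_distrib]
  abel

end Dressing

section EntrywiseDerivative

-- `Matrix` carries no norm instance, so matrix-valued functions are differentiated entrywise.
def HasDerivAtEntrywise {ι κ : Type*} (A : ℝ → Matrix ι κ ℂ) (A' : Matrix ι κ ℂ) (x : ℝ) :
    Prop :=
  ∀ i j, HasDerivAt (fun y => A y i j) (A' i j) x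

variable {x : ℝ}

theorem HasDerivAtEntrywise.mul {ι κ ν : Type*} [Fintype κ] {A : ℝ → Matrix ι κ ℂ}
    {B : ℝ → Matrix κ ν ℂ} {A' : Matrix ι κ ℂ} {B' : Matrix κ ν ℂ}
    (hA : HasDerivAtEntrywise A A' x) (hB : HasDerivAtEntrywise B B' x) :
    HasDerivAtEntrywise (fun y => A y * B y) (A' * B x + A x * B') x := by
  intro i j
  simp only [mul_apply, Matrix.add_apply, ← Finset.sum_add_distrib]
  exact .fun_sum fun k _ => (hA i k).fun_mul (hB k j)

theorem hasDerivAtEntrywise_dressing {n : ℕ} (w : ℂ) (z : Fin n → ℂ) {r s : Fin n → ℝ → Fin 2 → ℂ}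
    {r' s' : Fin n → Fin 2 → ℂ} (hr : ∀ k, HasDerivAt (r k) (r' k) x)
    (hs : ∀ k, HasDerivAt (s k) (s' k) x) :
    HasDerivAtEntrywise (fun y => dressing w z (fun k => r k y) fun k => s k y)
      (∑ k, (I / (w - z k)) • (outer (r' k) (s k x) + outer (r k x) (s' k))) x := by
  intro a b
  have houter (k : Fin n) : HasDerivAt (fun y => r k y a * conj (s k y b))
      (r' k a * conj (s k x b) + r k x a * conj (s' k b)) x :=
    (hasDerivAt_pi.1 (hr k) a).mul (hasDerivAt_pi.1 (hs k) b).star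
  have hsum := (HasDerivAt.fun_sum (u := Finset.univ) fun k _ =>
    (houter k).const_mul (I / (w - z k))).const_add ((1 : Matrix (Fin 2) (Fin 2) ℂ) a b)
  simp only [dressing, outer, Matrix.add_apply, Matrix.sum_apply, Matrix.smul_apply, of_apply,
    smul_eq_mul]
  exact hsum

end EntrywiseDerivative

theorem stmt_6_general (n : ℕ) (q₀ : ℝ → ℂ)
    (z : Fin n → ℂ) (him : ∀ k, 0 < (z k).im)
    (s : Fin n → ℝ → Fin 2 → ℂ)
    (hs : ∀ k x, HasDerivAt (s k) ((Ux (starRingEnd ℂ (z k)) (q₀ x)).mulVec (s k x)) x)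
    (hM : ∀ x, IsUnit (gram z fun k => s k x))
    (r : Fin n → ℝ → Fin 2 → ℂ)
    (hr : ∀ x, L1sys z (fun k => s k x) fun k => r k x)
    (q : ℝ → ℂ) (hq : ∀ x, q x = dressQ z (q₀ x) fun k => s k x)
    (w : ℂ) (hw : ∀ k, w ≠ z k ∧ w ≠ starRingEnd ℂ (z k))
    (φ₀ : ℝ → Matrix (Fin 2) (Fin 2) ℂ)
    (hφ₀ : ∀ x i j, HasDerivAt (fun y => φ₀ y i j) ((Ux w (q₀ x) * φ₀ x) i j) x)
    (φ : ℝ → Matrix (Fin 2) (Fin 2) ℂ)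
    (hφdef : ∀ x,
      φ x = (1 + ∑ k, (Complex.I / (w - z k)) • outer (r k x) (s k x)) * φ₀ x) :
    ∀ x i j, HasDerivAt (fun y => φ y i j) ((Ux w (q x) * φ x) i j) x := by
  intro x
  have hden (k j : Fin n) : conj (z k) - z j ≠ 0 := conj_sub_ne_zero_of_im_pos (him k) (him j)
  have hp : Qm (q x) - Qm (q₀ x)
      = (∑ k, outer (r k x) (s k x)) * sigma3 - sigma3 * ∑ k, outer (r k x) (s k x) := by
    rw [hq x]
    exact (hr x).Qm_dressQ_sub z (hM x) (q₀ x)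
  have hr' := L1sys.hasDerivAt hr hM hden (hs · x) hp
  have hχ := hasDerivAtEntrywise_dressing w z hr' (hs · x)
  rw [← Ux_mul_dressing_sub_dressing_mul_Ux w z (fun k => (hw k).1) hp] at hχ
  rw [show φ = fun y => dressing w z (fun k => r k y) (fun k => s k y) * φ₀ y from funext hφdef]
  refine fun i j => ((hχ.mul (hφ₀ x)) i j).congr_deriv ?_
  simp only [sub_mul, mul_assoc, sub_add_cancel]

/-- The dressed matrix `φ = χ φ₀` solves `φ' = (-i z σ₃ + Q(q)) φ` for the dressed
potential `q`. -/
theorem stmt_6 (n : ℕ) (hn : 1 ≤ n) (q₀ : ℝ → ℂ) (hq₀ : Continuous q₀)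
    (z : Fin n → ℂ) (hz : Function.Injective z) (him : ∀ k, 0 < (z k).im)
    (s : Fin n → ℝ → Fin 2 → ℂ)
    (hs : ∀ k x, HasDerivAt (s k) ((Ux (starRingEnd ℂ (z k)) (q₀ x)).mulVec (s k x)) x)
    (hM : ∀ x, IsUnit (gram z fun k => s k x))
    (r : Fin n → ℝ → Fin 2 → ℂ)
    (hr : ∀ x, L1sys z (fun k => s k x) fun k => r k x)
    (q : ℝ → ℂ) (hq : ∀ x, q x = dressQ z (q₀ x) fun k => s k x)
    (w : ℂ) (hw : ∀ k, w ≠ z k ∧ w ≠ starRingEnd ℂ (z k))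
    (φ₀ : ℝ → Matrix (Fin 2) (Fin 2) ℂ)
    (hφ₀ : ∀ x i j, HasDerivAt (fun y => φ₀ y i j) ((Ux w (q₀ x) * φ₀ x) i j) x)
    (φ : ℝ → Matrix (Fin 2) (Fin 2) ℂ)
    (hφdef : ∀ x,
      φ x = (1 + ∑ k, (Complex.I / (w - z k)) • outer (r k x) (s k x)) * φ₀ x) :
    ∀ x i j, HasDerivAt (fun y => φ y i j) ((Ux w (q x) * φ x) i j) x :=
  stmt_6_general n q₀ z him s hs hM r hr q hq w hw φ₀ hφ₀ φ hφdef
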